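/- arXiv:2005.05196 — 4 statements merged into one kernel-verified Lean document; each statement's English description precedes it below -/
import Mathlib

section
/- Define σ(x,r) = |√x − √r| for x, r > 0. Then σ is a salience function satisfying diminishing sensitivity (σ(a+ε, b+ε) ≤ σ(a,b) for all ε > 0, a, b > 0) but NOT homogeneous of degree zero: there exist a, b, α > 0 with σ(αa, αb) ≠ σ(a,b). In particular, for x = (2,2) and r = (4,1), we have σ(2,4) > σ(2,1), even though x₁x₂ = r₁r₂. -/
/-- The square-root salience function `σ(x,r) = |√x − √r|`. -/
noncomputable def sigmaSqrt (x r : ℝ) : ℝ := |Real.sqrt x - Real.sqrt r|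

lemma sigmaSqrt_dimSens_aux (a b ε : ℝ) (hb : 0 < b) (hε : 0 < ε) (hba : b ≤ a) :
    sigmaSqrt (a + ε) (b + ε) ≤ sigmaSqrt a b := by
  have ha : 0 < a := lt_of_lt_of_le hb hba
  have h1 : Real.sqrt b ≤ Real.sqrt a := Real.sqrt_le_sqrt hba
  have h2 : Real.sqrt (b + ε) ≤ Real.sqrt (a + ε) := Real.sqrt_le_sqrt (by linarith)
  rw [sigmaSqrt, sigmaSqrt, abs_of_nonneg (by linarith), abs_of_nonneg (by linarith)]
  have sa := Real.sq_sqrt ha.le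
  have sb := Real.sq_sqrt hb.le
  have sae := Real.sq_sqrt (show (0:ℝ) ≤ a + ε by linarith)
  have sbe := Real.sq_sqrt (show (0:ℝ) ≤ b + ε by linarith)
  have na : 0 < Real.sqrt a := Real.sqrt_pos.mpr ha
  have nb : 0 < Real.sqrt b := Real.sqrt_pos.mpr hb
  have nae : 0 < Real.sqrt (a + ε) := Real.sqrt_pos.mpr (by linarith)
  have nbe : 0 < Real.sqrt (b + ε) := Real.sqrt_pos.mpr (by linarith)
  have hlt : Real.sqrt a ≤ Real.sqrt (a + ε) := Real.sqrt_le_sqrt (by linarith)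
  have hlt2 : Real.sqrt b ≤ Real.sqrt (b + ε) := Real.sqrt_le_sqrt (by linarith)
  nlinarith [mul_pos nae nbe, mul_pos na nb, mul_pos nae nb, mul_pos na nbe,
    mul_nonneg (sub_nonneg.mpr h1) (sub_nonneg.mpr h2)]

/-- `σ(x,r) = |√x − √r|` is a salience function (symmetric, grounded,
continuous, increasing in contrast) that satisfies diminishing sensitivity but is
NOT homogeneous of degree zero; in particular `σ(2,4) > σ(2,1)`. -/
theorem sigmaSqrt_dimSens_not_HOD :
    (∀ x r : ℝ, 0 < x → 0 < r → sigmaSqrt x r = sigmaSqrt r x) ∧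
    (∀ r r' : ℝ, 0 < r → 0 < r' → sigmaSqrt r r = sigmaSqrt r' r') ∧
    Continuous (fun p : ℝ × ℝ => sigmaSqrt p.1 p.2) ∧
    (∀ a b ε : ℝ, 0 < b → b < a → 0 < ε →
      sigmaSqrt (a + ε) b > sigmaSqrt a b ∧
      (0 < b - ε → sigmaSqrt a (b - ε) > sigmaSqrt a b)) ∧
    (∀ a b ε : ℝ, 0 < a → 0 < b → 0 < ε →
      sigmaSqrt (a + ε) (b + ε) ≤ sigmaSqrt a b) ∧
    (∃ a b α : ℝ, 0 < a ∧ 0 < b ∧ 0 < α ∧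
      sigmaSqrt (α * a) (α * b) ≠ sigmaSqrt a b) ∧
    sigmaSqrt 2 4 > sigmaSqrt 2 1 := by
  refine ⟨?_, ?_, ?_, ?_, ?_, ?_, ?_⟩
  · intro x r _ _; exact abs_sub_comm _ _
  · intro r r' _ _; simp [sigmaSqrt]
  · exact ((Real.continuous_sqrt.comp continuous_fst).sub
      (Real.continuous_sqrt.comp continuous_snd)).abs
  · intro a b ε hb hba hε
    have h1 : Real.sqrt b < Real.sqrt a := Real.sqrt_lt_sqrt hb.le hba
    constructor
    · have h2 : Real.sqrt a < Real.sqrt (a + ε) := Real.sqrt_lt_sqrt (by linarith) (by linarith)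
      rw [sigmaSqrt, sigmaSqrt, abs_of_nonneg (by linarith), abs_of_nonneg (by linarith)]
      linarith
    · intro hbe
      have h2 : Real.sqrt (b - ε) < Real.sqrt b := Real.sqrt_lt_sqrt hbe.le (by linarith)
      rw [sigmaSqrt, sigmaSqrt, abs_of_nonneg (by linarith), abs_of_nonneg (by linarith)]
      linarith
  · intro a b ε ha hb hε
    rcases le_total b a with h | h
    · exact sigmaSqrt_dimSens_aux a b ε hb hε h
    · have := sigmaSqrt_dimSens_aux b a ε ha hε h
      rwa [show sigmaSqrt (a+ε) (b+ε) = sigmaSqrt (b+ε) (a+ε) from abs_sub_comm _ _,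
        show sigmaSqrt a b = sigmaSqrt b a from abs_sub_comm _ _]
  · refine ⟨1, 4, 4, one_pos, by norm_num, by norm_num, ?_⟩
    have h4 : Real.sqrt 4 = 2 := by
      rw [show (4:ℝ) = 2^2 by norm_num, Real.sqrt_sq (by norm_num)]
    have h16 : Real.sqrt 16 = 4 := by
      rw [show (16:ℝ) = 4^2 by norm_num, Real.sqrt_sq (by norm_num)]
    norm_num [sigmaSqrt, h4, h16, Real.sqrt_one]
  · have h4 : Real.sqrt 4 = 2 := by
      rw [show (4:ℝ) = 2^2 by norm_num, Real.sqrt_sq (by norm_num)]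
    have h2 : Real.sqrt 2 < 3/2 := by
      rw [show (3/2:ℝ) = Real.sqrt ((3/2)^2) from (Real.sqrt_sq (by norm_num)).symm]
      exact Real.sqrt_lt_sqrt (by norm_num) (by norm_num)
    have h2' : 1 ≤ Real.sqrt 2 := by
      rw [show (1:ℝ) = Real.sqrt 1 from Real.sqrt_one.symm]
      exact Real.sqrt_le_sqrt (by norm_num)
    rw [sigmaSqrt, sigmaSqrt, h4, Real.sqrt_one, abs_of_nonpos (by linarith),
      abs_of_nonneg (by linarith)]
    linarith
end

section
/- Let σ be a salience function generating categories K¹(r) = {x ∈ ℝ²₊₊ : σ(x₁,r₁) > σ(x₂,r₂)} and K²(r) = {x : σ(x₁,r₁) < σ(x₂,r₂)}. Then for every reference point r, K¹(r) and K²(r) are regular open sets, i.e., K^k(r) = int(cl(K^k(r))) for k = 1, 2. -/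
abbrev PosQuad : Type := {p : ℝ × ℝ // 0 < p.1 ∧ 0 < p.2}

lemma quad_open : IsOpen {p : ℝ × ℝ | 0 < p.1 ∧ 0 < p.2} :=
  (isOpen_lt continuous_const continuous_fst).inter
    (isOpen_lt continuous_const continuous_snd)

/-- Off-diagonal values exceed diagonal values. -/
lemma offdiag (σ : ℝ → ℝ → ℝ)
    (hcont : ContinuousOn (fun p : ℝ × ℝ => σ p.1 p.2) {p | 0 < p.1 ∧ 0 < p.2})
    (hcontrast : ∀ a b ε : ℝ, 0 < b → b < a → 0 < ε →
      σ (a + ε) b > σ a b ∧ (0 < b - ε → σ a (b - ε) > σ a b)) :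
    ∀ a b : ℝ, 0 < b → b < a → σ b b < σ a b := by
  intro a b hb hba
  set c := (a + b) / 2 with hc
  have hbc : b < c := by simp [hc]; linarith
  have hca : c < a := by simp [hc]; linarith
  have h1 : σ c b < σ a b := by
    have := (hcontrast c b (a - c) hb hbc (by linarith)).1
    have h : c + (a - c) = a := by ring
    rwa [h] at this
  have h2 : σ b b ≤ σ c b := by
    have hat : ContinuousAt (fun p : ℝ × ℝ => σ p.1 p.2) (b, b) :=
      hcont.continuousAt (quad_open.mem_nhds ⟨hb, hb⟩)
    have hg : Continuous fun t : ℝ => ((t, b) : ℝ × ℝ) :=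
      continuous_id.prodMk continuous_const
    have hat' : ContinuousAt (fun t : ℝ => σ t b) b := hat.comp (f := fun t : ℝ => ((t, b) : ℝ × ℝ)) hg.continuousAt
    have htend : Filter.Tendsto (fun t : ℝ => σ t b) (nhdsWithin b (Set.Ioi b))
        (nhds (σ b b)) := hat'.tendsto.mono_left nhdsWithin_le_nhds
    refine le_of_tendsto htend ?_
    filter_upwards [Ioo_mem_nhdsGT_of_mem ⟨le_refl b, hbc⟩] with t ht
    have := (hcontrast t b (c - t) hb ht.1 (by linarith [ht.2])).1
    have h : t + (c - t) = c := by ring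
    rw [h] at this
    exact le_of_lt this
  linarith

/-- One can always perturb the first argument to strictly increase salience. -/
lemma perturb (σ : ℝ → ℝ → ℝ)
    (hcont : ContinuousOn (fun p : ℝ × ℝ => σ p.1 p.2) {p | 0 < p.1 ∧ 0 < p.2})
    (hsym : ∀ a b : ℝ, 0 < a → 0 < b → σ a b = σ b a)
    (hcontrast : ∀ a b ε : ℝ, 0 < b → b < a → 0 < ε →
      σ (a + ε) b > σ a b ∧ (0 < b - ε → σ a (b - ε) > σ a b)) :
    ∀ a b δ : ℝ, 0 < a → 0 < b → 0 < δ →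
      ∃ a' : ℝ, 0 < a' ∧ |a' - a| < δ ∧ σ a b < σ a' b := by
  intro a b δ ha hb hδ
  rcases lt_trichotomy a b with h | h | h
  · -- a < b : decrease a
    set ε := min (δ / 2) (min ((b - a) / 2) (a / 2)) with hε
    have hε0 : 0 < ε := by
      simp [hε]; constructor; linarith; constructor <;> linarith
    have hεa : ε ≤ a / 2 := le_trans (min_le_right _ _) (min_le_right _ _)
    have hεδ : ε ≤ δ / 2 := min_le_left _ _
    have ha' : 0 < a - ε := by linarith
    refine ⟨a - ε, ha', ?_, ?_⟩
    · rw [abs_sub_lt_iff]; constructor <;> linarith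
    · have key := (hcontrast b a ε ha h hε0).2 ha'
      rw [hsym a b ha hb, hsym (a - ε) b ha' hb]
      exact key
  · -- a = b : increase a, use offdiag
    refine ⟨a + δ / 2, by linarith, ?_, ?_⟩
    · rw [abs_sub_lt_iff]; constructor <;> linarith
    · subst h
      exact offdiag σ hcont hcontrast (a + δ / 2) a ha (by linarith)
  · -- b < a : increase a
    refine ⟨a + δ / 2, by linarith, ?_, ?_⟩
    · rw [abs_sub_lt_iff]; constructor <;> linarith
    · exact (hcontrast a b (δ / 2) hb h (by linarith)).1

/-- General criterion for regular openness. -/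
lemma regular_open_of_complement {X : Type*} [TopologicalSpace X] {U V : Set X}
    (hU : IsOpen U) (hV : IsOpen V) (hdisj : Disjoint U V)
    (hdense : Uᶜ ⊆ closure V) : interior (closure U) = U := by
  apply subset_antisymm
  · intro x hx
    by_contra hxU
    have hxV : x ∈ closure V := hdense hxU
    -- interior (closure U) is an open neighborhood of x, so it meets V
    have hmeet : ((interior (closure U)) ∩ V).Nonempty :=
      mem_closure_iff.mp hxV _ isOpen_interior hx
    obtain ⟨y, hy1, hy2⟩ := hmeet
    -- but V is disjoint from closure U
    have : V ∩ closure U = ∅ := by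
      have hsub : U ⊆ Vᶜ := fun z hz hz' => hdisj.ne_of_mem hz hz' rfl
      have : closure U ⊆ Vᶜ := closure_minimal hsub hV.isClosed_compl
      ext z; simp only [Set.mem_inter_iff, Set.mem_empty_iff_false, iff_false]
      rintro ⟨hzV, hzU⟩; exact this hzU hzV
    have : y ∈ (∅ : Set X) := this ▸ ⟨hy2, interior_subset hy1⟩
    exact this
  · exact hU.subset_interior_closure

/-- for a continuous, symmetric, grounded salience function that is
increasing in contrast, the salience categories
`K¹(r) = {x : σ(x₁,r₁) > σ(x₂,r₂)}` and `K²(r) = {x : σ(x₁,r₁) < σ(x₂,r₂)}`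
are regular open subsets of `ℝ²₊₊`, i.e. `K = int(cl(K))`. -/
theorem salience_categories_regular_open (σ : ℝ → ℝ → ℝ)
    (hcont : ContinuousOn (fun p : ℝ × ℝ => σ p.1 p.2) {p | 0 < p.1 ∧ 0 < p.2})
    (hsym : ∀ a b : ℝ, 0 < a → 0 < b → σ a b = σ b a)
    (hground : ∀ r r' : ℝ, 0 < r → 0 < r' → σ r r = σ r' r')
    (hcontrast : ∀ a b ε : ℝ, 0 < b → b < a → 0 < ε →
      σ (a + ε) b > σ a b ∧ (0 < b - ε → σ a (b - ε) > σ a b)) :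
    ∀ r : PosQuad,
      interior (closure {x : PosQuad | σ x.1.1 r.1.1 > σ x.1.2 r.1.2}) =
        {x : PosQuad | σ x.1.1 r.1.1 > σ x.1.2 r.1.2} ∧
      interior (closure {x : PosQuad | σ x.1.1 r.1.1 < σ x.1.2 r.1.2}) =
        {x : PosQuad | σ x.1.1 r.1.1 < σ x.1.2 r.1.2} := by
  intro r
  obtain ⟨⟨r1, r2⟩, hr1, hr2⟩ := r
  set K1 : Set PosQuad := {x | σ x.1.1 r1 > σ x.1.2 r2} with hK1
  set K2 : Set PosQuad := {x | σ x.1.1 r1 < σ x.1.2 r2} with hK2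
  -- continuity of the two coordinate salience maps on PosQuad
  have hf1 : Continuous (fun x : PosQuad => σ x.1.1 r1) := by
    have : Continuous (fun x : PosQuad => ((x.1.1, r1) : ℝ × ℝ)) :=
      ((continuous_fst.comp continuous_subtype_val).prodMk continuous_const)
    exact hcont.comp_continuous this (fun x => ⟨x.2.1, hr1⟩)
  have hf2 : Continuous (fun x : PosQuad => σ x.1.2 r2) := by
    have : Continuous (fun x : PosQuad => ((x.1.2, r2) : ℝ × ℝ)) :=
      ((continuous_snd.comp continuous_subtype_val).prodMk continuous_const)
    exact hcont.comp_continuous this (fun x => ⟨x.2.2, hr2⟩)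
  have hK1open : IsOpen K1 := isOpen_lt hf2 hf1
  have hK2open : IsOpen K2 := isOpen_lt hf1 hf2
  have hdisj : Disjoint K1 K2 := by
    rw [Set.disjoint_left]; intro x h1 h2
    simp only [hK1, hK2, Set.mem_setOf_eq] at h1 h2
    linarith
  -- density lemmas
  have hd1 : K1ᶜ ⊆ closure K2 := by
    intro x hx
    have hle : σ x.1.1 r1 ≤ σ x.1.2 r2 := not_lt.mp hx
    rw [Metric.mem_closure_iff]
    intro ε hε
    obtain ⟨a', ha'0, ha'd, ha'σ⟩ :=
      perturb σ hcont hsym hcontrast x.1.2 r2 ε x.2.2 hr2 hε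
    refine ⟨⟨(x.1.1, a'), ⟨x.2.1, ha'0⟩⟩, ?_, ?_⟩
    · exact lt_of_le_of_lt hle ha'σ
    · rw [Subtype.dist_eq, Prod.dist_eq]
      simp only [Real.dist_eq]
      apply max_lt
      · simpa using hε
      · simpa [abs_sub_comm] using ha'd
  have hd2 : K2ᶜ ⊆ closure K1 := by
    intro x hx
    have hle : σ x.1.2 r2 ≤ σ x.1.1 r1 := not_lt.mp hx
    rw [Metric.mem_closure_iff]
    intro ε hε
    obtain ⟨a', ha'0, ha'd, ha'σ⟩ :=
      perturb σ hcont hsym hcontrast x.1.1 r1 ε x.2.1 hr1 hε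
    refine ⟨⟨(a', x.1.2), ⟨ha'0, x.2.2⟩⟩, ?_, ?_⟩
    · exact lt_of_le_of_lt hle ha'σ
    · rw [Subtype.dist_eq, Prod.dist_eq]
      simp only [Real.dist_eq]
      apply max_lt
      · simpa [abs_sub_comm] using ha'd
      · simpa using hε
  exact ⟨regular_open_of_complement hK1open hK2open hdisj hd1,
         regular_open_of_complement hK2open hK1open hdisj.symm hd2⟩
end

section
/- In the BGS salient-thinking model with linear utility indexes, weight parameter w = 0.6, and salience function σ(a,b) = |a−b|/(a+b) (with attributes interpreted as (price as a negative number, quality)): let the alternatives be French Syrah at price 8 with quality 8, Australian Shiraz at price 2 with quality 6.9, Syrah at price 10, water at price 2 with quality 5.1, Shiraz at price 10, water at price 8, and reference point r = ((−10 + −8)/2, (5.1 + 6.9)/2) = (−9, 6). Then evaluating each pair by V(x) = w·u_s + (1−w)·u_n, where the salient attribute (determined by σ relative to r) gets weight w: (−8, 8) ≻ (−2, 6.9), (−2, 5.1) ≻ (−10, 8), and (−10, 6.9) ≻ (−8, 5.1). Hence the induced preference at fixed reference r violates the Cancellation axiom. -/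
/-- The BGS salience function `σ(a,b) = |a − b|/(a + b)`. -/
noncomputable def sigmaBGS (a b : ℝ) : ℝ := |a - b| / (a + b)

/-- BGS evaluation with weight `w = 0.6` on the salient attribute, reference point
`r = (−9, 6)` (so the price reference has magnitude `9`), where attribute 1 is price
(a negative number, salience computed from magnitudes) and attribute 2 is quality. -/
noncomputable def Vwine (x₁ x₂ : ℝ) : ℝ :=
  if sigmaBGS |x₁| 9 > sigmaBGS x₂ 6 then 0.6 * x₁ + 0.4 * x₂
  else 0.4 * x₁ + 0.6 * x₂

lemma V1 : Vwine (-8) 8 = 1.6 := by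
  rw [Vwine, if_neg] <;> simp [sigmaBGS, abs_of_nonpos, abs_of_nonneg] <;> norm_num [abs_of_nonneg]
lemma V2 : Vwine (-2) 6.9 = 1.56 := by
  rw [Vwine, if_pos] <;> simp [sigmaBGS, abs_of_nonpos, abs_of_nonneg] <;> norm_num [abs_of_nonneg]
lemma V3 : Vwine (-2) 5.1 = 0.84 := by
  rw [Vwine, if_pos] <;> simp [sigmaBGS, abs_of_nonpos, abs_of_nonneg] <;> norm_num [abs_of_nonneg]
lemma V4 : Vwine (-10) 8 = 0.8 := by
  rw [Vwine, if_neg] <;> simp [sigmaBGS, abs_of_nonpos, abs_of_nonneg] <;> norm_num [abs_of_nonneg]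
lemma V5 : Vwine (-10) 6.9 = 0.14 := by
  rw [Vwine, if_neg] <;> simp [sigmaBGS, abs_of_nonpos, abs_of_nonneg] <;> norm_num [abs_of_nonneg]
lemma V6 : Vwine (-8) 5.1 = -0.14 := by
  rw [Vwine, if_neg] <;> simp [sigmaBGS, abs_of_nonpos, abs_of_nonneg] <;> norm_num [abs_of_nonneg]

/-- in the BGS model with `w = 0.6` and reference `r = (−9,6)`:
`(−8,8) ≻ (−2,6.9)`, `(−2,5.1) ≻ (−10,8)`, and `(−10,6.9) ≻ (−8,5.1)`; hence the
induced fixed-reference preference violates Cancellation. -/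
theorem bgs_wine_cancellation_violation :
    Vwine (-8) 8 > Vwine (-2) 6.9 ∧
    Vwine (-2) 5.1 > Vwine (-10) 8 ∧
    Vwine (-10) 6.9 > Vwine (-8) 5.1 ∧
    ¬ (∀ x₁ y₁ z₁ x₂ y₂ z₂ : ℝ,
        Vwine x₁ z₂ ≥ Vwine z₁ y₂ → Vwine z₁ x₂ ≥ Vwine y₁ z₂ →
        Vwine x₁ x₂ ≥ Vwine y₁ y₂) := by
  refine ⟨by rw [V1, V2]; norm_num, by rw [V3, V4]; norm_num, by rw [V5, V6]; norm_num, ?_⟩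
  intro h
  have := h (-2) (-8) (-10) 6.9 8 5.1 (by rw [V3, V4]; norm_num) (by rw [V5, V6]; norm_num)
  rw [V1, V2] at this; norm_num at this
end

section
/- Let U¹(x) = w₁¹u₁(x₁) + w₂¹u₂(x₂) and U²(x) = w₁²u₁(x₁) + w₂²u₂(x₂) with all weights strictly positive, w₁¹/w₂¹ > w₁²/w₂², and u₁, u₂ continuous and strictly increasing on ℝ₊₊. Then for every x ∈ ℝ²₊₊, the local indifference sets differ: for every neighborhood O of x there exists y ∈ O such that exactly one of U¹(y) = U¹(x) and U²(y) = U²(x) holds. -/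
/-- for two reweighted additive category utilities
`U¹(x) = a₁u₁(x₁) + a₂u₂(x₂)` and `U²(x) = b₁u₁(x₁) + b₂u₂(x₂)` with strictly
positive weights, `a₁/a₂ > b₁/b₂`, and `u₁, u₂` continuous and strictly increasing
on `ℝ₊₊`, the local indifference sets differ at every `x ∈ ℝ²₊₊`: every neighborhood
of `x` contains a positive point `y` satisfying exactly one of `U¹(y) = U¹(x)` and
`U²(y) = U²(x)`. -/
theorem local_indifference_sets_differ (u₁ u₂ : ℝ → ℝ) (a₁ a₂ b₁ b₂ : ℝ)
    (ha₁ : 0 < a₁) (ha₂ : 0 < a₂) (hb₁ : 0 < b₁) (hb₂ : 0 < b₂)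
    (hratio : a₁ / a₂ > b₁ / b₂)
    (hc₁ : ContinuousOn u₁ (Set.Ioi 0)) (hc₂ : ContinuousOn u₂ (Set.Ioi 0))
    (hm₁ : StrictMonoOn u₁ (Set.Ioi 0)) (hm₂ : StrictMonoOn u₂ (Set.Ioi 0)) :
    ∀ x : ℝ × ℝ, 0 < x.1 → 0 < x.2 → ∀ O ∈ nhds x,
      ∃ y : ℝ × ℝ, y ∈ O ∧ 0 < y.1 ∧ 0 < y.2 ∧
        Xor' (a₁ * u₁ y.1 + a₂ * u₂ y.2 = a₁ * u₁ x.1 + a₂ * u₂ x.2)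
             (b₁ * u₁ y.1 + b₂ * u₂ y.2 = b₁ * u₁ x.1 + b₂ * u₂ x.2) := by
  intro x hx₁ hx₂ O hO
  obtain ⟨δ, hδ, hball⟩ := Metric.mem_nhds_iff.mp hO
  -- radius controlling everything
  set r : ℝ := min δ (min x.1 x.2) with hr
  have hr0 : 0 < r := lt_min hδ (lt_min hx₁ hx₂)
  have hrx1 : r ≤ x.1 := le_trans (min_le_right _ _) (min_le_left _ _)
  have hrx2 : r ≤ x.2 := le_trans (min_le_right _ _) (min_le_right _ _)
  have hrδ : r ≤ δ := min_le_left _ _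
  -- lower point for the second coordinate
  set t : ℝ := x.2 - r / 2 with ht
  have ht0 : 0 < t := by simp only [ht]; linarith
  have htlt : t < x.2 := by simp only [ht]; linarith
  have hu2t : u₂ t < u₂ x.2 := hm₂ ht0 hx₂ htlt
  set M : ℝ := b₂ / b₁ * (u₂ x.2 - u₂ t) with hM
  have hM0 : 0 < M := mul_pos (by positivity) (by linarith)
  -- continuity of u₁ at x.1
  have hcont : ContinuousAt u₁ x.1 :=
    (hc₁.continuousWithinAt hx₁).continuousAt (isOpen_Ioi.mem_nhds hx₁)
  obtain ⟨η, hη0, hη⟩ := Metric.continuousAt_iff.mp hcont M hM0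
  set ε : ℝ := min (r / 2) η / 2 with hε
  have hε0 : 0 < ε := by positivity
  have hεr : ε < r / 2 := by
    have : ε ≤ r / 2 / 2 := by
      simp only [hε]
      gcongr
      exact min_le_left _ _
    linarith
  have hεη : ε < η := by
    have : ε ≤ η / 2 := by
      simp only [hε]
      gcongr
      exact min_le_right _ _
    linarith
  set y₁ : ℝ := x.1 + ε with hy₁
  have hy₁pos : 0 < y₁ := by simp only [hy₁]; linarith
  have hΔsmall : |u₁ y₁ - u₁ x.1| < M := by
    have := hη (show dist y₁ x.1 < η by
      simp only [Real.dist_eq, hy₁]; rw [abs_of_pos] <;> linarith)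
    simpa [Real.dist_eq] using this
  set Δ : ℝ := u₁ y₁ - u₁ x.1 with hΔ
  have hΔpos : 0 < Δ := sub_pos.mpr (hm₁ hx₁ hy₁pos (by simp only [hy₁]; linarith))
  have hΔM : Δ < M := lt_of_abs_lt hΔsmall
  -- target value for u₂
  set c : ℝ := u₂ x.2 - b₁ / b₂ * Δ with hc
  have hclt : c < u₂ x.2 := by
    have : 0 < b₁ / b₂ * Δ := by positivity
    simp only [hc]; linarith
  have hcgt : u₂ t < c := by
    have h1 : b₁ / b₂ * Δ < b₁ / b₂ * M := by
      apply mul_lt_mul_of_pos_left hΔM; positivity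
    have h2 : b₁ / b₂ * M = u₂ x.2 - u₂ t := by
      rw [hM, ← mul_assoc, div_mul_div_comm, mul_comm b₁ b₂, div_self (by positivity : b₂ * b₁ ≠ 0), one_mul]
    simp only [hc]; linarith
  -- IVT on [t, x.2]
  have hsub : Set.Icc t x.2 ⊆ Set.Ioi 0 := fun z hz => lt_of_lt_of_le ht0 hz.1
  have hivt := intermediate_value_Icc (le_of_lt htlt) (hc₂.mono hsub)
  obtain ⟨y₂, hy₂mem, hy₂val⟩ := hivt ⟨le_of_lt hcgt, le_of_lt hclt⟩
  have hy₂pos : 0 < y₂ := lt_of_lt_of_le ht0 hy₂mem.1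
  refine ⟨(y₁, y₂), ?_, hy₁pos, hy₂pos, ?_⟩
  · apply hball
    rw [Metric.mem_ball, Prod.dist_eq]
    have d1 : dist y₁ x.1 < δ := by
      rw [Real.dist_eq, hy₁]
      rw [abs_of_pos] <;> [skip; linarith]
      linarith
    have d2 : dist y₂ x.2 < δ := by
      rw [Real.dist_eq, abs_lt]
      constructor
      · have := hy₂mem.1; simp only [ht] at this; linarith
      · have := hy₂mem.2; linarith
    exact max_lt d1 d2
  · refine Or.inr ⟨?_, ?_⟩
    · -- U² equal
      simp only
      rw [hy₂val, hc]
      field_simp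
      ring
    · -- U¹ differs
      simp only at hy₂val ⊢
      rw [hy₂val]
      intro h
      have hab : b₁ * a₂ < a₁ * b₂ := by
        have := (div_lt_div_iff₀ hb₂ ha₂).mp hratio
        linarith
      have hkey : a₂ * (b₁ / b₂) < a₁ := by
        rw [mul_div_assoc', div_lt_iff₀ hb₂]
        nlinarith
      have hzero : a₁ * u₁ y₁ + a₂ * c - (a₁ * u₁ x.1 + a₂ * u₂ x.2)
          = (a₁ - a₂ * (b₁ / b₂)) * Δ := by simp only [hc, hΔ]; ring
      have hpos := mul_pos (sub_pos.mpr hkey) hΔpos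
      rw [h, sub_self] at hzero
      exact absurd hzero.symm (ne_of_gt hpos)
end
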